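/- Let L be a Hermitian Mackey functor and Mₙ(L) the matrix Hermitian Mackey functor. The distributivity axiom holds for the matrix action: for all A, A' ∈ Mₙ(L(ℤ/2)) and B ∈ Mₙ(L)(*), (A + A')•B = A•B + A'•B + T(A·R(B)·w(A')), where T is the matrix transfer and w(A') is the conjugate transpose. -/

import Mathlib

/-- A Hermitian ℤ/2-Mackey functor: a ring `U = L(ℤ/2)` with anti-involution `w`,
an abelian group `F = L(*)`, restriction `R`, transfer `T` with `R (T a) = a + w a`,
and a multiplicative left action `act` of `U` on `F`. -/
structure HermitianMackey (U F : Type) [Ring U] [AddCommGroup F] where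
  w : U → U
  w_add : ∀ a a' : U, w (a + a') = w a + w a'
  w_invol : ∀ a : U, w (w a) = a
  w_mul : ∀ a a' : U, w (a * a') = w a' * w a
  w_one : w 1 = 1
  R : F → U
  R_add : ∀ b b' : F, R (b + b') = R b + R b'
  R_equiv : ∀ b : F, w (R b) = R b
  T : U → F
  T_add : ∀ a a' : U, T (a + a') = T a + T a'
  T_equiv : ∀ a : U, T (w a) = T a
  RT : ∀ a : U, R (T a) = a + w a
  act : U → F → F
  act_add : ∀ (a : U) (b b' : F), act a (b + b') = act a b + act a b'
  act_mul : ∀ (a a' : U) (b : F), act (a * a') b = act a (act a' b)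
  act_one : ∀ b : F, act 1 b = b
  R_act : ∀ (a : U) (b : F), R (act a b) = a * R b * w a
  act_T : ∀ a c : U, act a (T c) = T (a * c * w a)
  add_act : ∀ (a a' : U) (b : F),
    act (a + a') b = act a b + act a' b + T (a * R b * w a')
  zero_act : ∀ b : F, act 0 b = 0

variable {U F : Type} [Ring U] [AddCommGroup F]

/-- The conjugate transpose `w(A)ᵢⱼ = w(Aⱼᵢ)`, the anti-involution of `Mₙ(L)(ℤ/2)`. -/
def conjT (L : HermitianMackey U F) {n : ℕ} (A : Matrix (Fin n) (Fin n) U) :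
    Matrix (Fin n) (Fin n) U :=
  Matrix.of fun i j => L.w (A j i)

/-- The restriction `R : Mₙ(L)(*) → Mₙ(L(ℤ/2))`. An element of `Mₙ(L)(*)` is
recorded as a pair `(Boff, Bdiag)`: the entries `Boff i j` for `i < j` lie in
`L(ℤ/2)` and the diagonal entries `Bdiag i` lie in `L(*)`; the restriction fills
in the lower entries via the involution `w`. -/
def mRest (L : HermitianMackey U F) {n : ℕ}
    (Boff : Fin n → Fin n → U) (Bdiag : Fin n → F) :
    Matrix (Fin n) (Fin n) U :=
  Matrix.of fun i j =>
    if i < j then Boff i j else if j < i then L.w (Boff j i) else L.R (Bdiag i)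

/-- Off-diagonal part of the matrix transfer `T : Mₙ(L(ℤ/2)) → Mₙ(L)(*)`:
`T(A)ᵢⱼ = Aᵢⱼ + w(Aⱼᵢ)` for `i < j`. -/
def mTransOff (L : HermitianMackey U F) {n : ℕ} (A : Matrix (Fin n) (Fin n) U) :
    Fin n → Fin n → U :=
  fun i j => A i j + L.w (A j i)

/-- Diagonal part of the matrix transfer: `T(A)ᵢᵢ = T(Aᵢᵢ)`. -/
def mTransDiag (L : HermitianMackey U F) {n : ℕ} (A : Matrix (Fin n) (Fin n) U) :
    Fin n → F :=
  fun i => L.T (A i i)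

/-- Off-diagonal part of the action of `Mₙ(L(ℤ/2))` on `Mₙ(L)(*)`:
`(A • B)ᵢⱼ = (A · R(B) · w(A))ᵢⱼ` for `i < j`. -/
def mActOff (L : HermitianMackey U F) {n : ℕ} (A : Matrix (Fin n) (Fin n) U)
    (Boff : Fin n → Fin n → U) (Bdiag : Fin n → F) : Fin n → Fin n → U :=
  fun i j => (A * mRest L Boff Bdiag * conjT L A) i j

/-- Diagonal part of the action of `Mₙ(L(ℤ/2))` on `Mₙ(L)(*)`:
`(A • B)ᵢᵢ = T(Σ_{k<l} Aᵢₖ · R(B)ₖₗ · w(Aᵢₗ)) + Σₖ Aᵢₖ • Bₖₖ`. -/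
def mActDiag (L : HermitianMackey U F) {n : ℕ} (A : Matrix (Fin n) (Fin n) U)
    (Boff : Fin n → Fin n → U) (Bdiag : Fin n → F) : Fin n → F :=
  fun i =>
    (∑ k : Fin n, ∑ l : Fin n,
        if k < l then L.T (A i k * mRest L Boff Bdiag k l * L.w (A i l)) else 0)
      + ∑ k : Fin n, L.act (A i k) (Bdiag k)

/-! Off the diagonal the identity is the expansion of `(A + A') R(B) w(A + A')`, together with
`w(A R(B) w(A')) = A' R(B) w(A)`, which holds because `R(B)` is `w`-Hermitian.
On the diagonal, `T` of the `i`-th diagonal entry of `A R(B) w(A')` splits into the strictly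
upper sum for `(A, A')`, the strictly lower one, which `T ∘ w = T` turns into the strictly upper
sum for `(A', A)`, and the diagonal terms `T(Aᵢₖ R(Bₖₖ) w(A'ᵢₖ))`; these are exactly the cross
terms produced by expanding `mActDiag (A + A')` with `add_act`. -/

namespace HermitianMackey

variable (L : HermitianMackey U F)

def wHom : U →+ U := AddMonoidHom.mk' L.w L.w_add

def THom : U →+ F := AddMonoidHom.mk' L.T L.T_add

lemma w_sum {ι : Type*} (s : Finset ι) (f : ι → U) :
    L.w (∑ x ∈ s, f x) = ∑ x ∈ s, L.w (f x) :=
  map_sum L.wHom f s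

lemma T_sum {ι : Type*} (s : Finset ι) (f : ι → U) :
    L.T (∑ x ∈ s, f x) = ∑ x ∈ s, L.T (f x) :=
  map_sum L.THom f s

end HermitianMackey

lemma Finset.sum_sum_eq_upper_add_lower_add_diag {ι M : Type*} [Fintype ι] [LinearOrder ι]
    [AddCommMonoid M] (f : ι → ι → M) :
    ∑ k, ∑ l, f k l =
      (∑ k, ∑ l, if k < l then f k l else 0) + (∑ k, ∑ l, if k < l then f l k else 0) +
        ∑ k, f k k := by
  have split : ∀ k l, f k l =
      (if k < l then f k l else 0) + (if l < k then f k l else 0) +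
        (if k = l then f k l else 0) := by
    intro k l
    rcases lt_trichotomy k l with h | rfl | h
    · simp [h, h.not_gt, h.ne]
    · simp
    · simp [h, h.not_gt, h.ne']
  have diag : ∀ k, ∑ l, (if k = l then f k l else 0) = f k k := fun k => by simp
  rw [Finset.sum_congr rfl fun k _ => Finset.sum_congr rfl fun l _ => split k l]
  simp only [Finset.sum_add_distrib, diag]
  rw [Finset.sum_comm (f := fun k l => if l < k then f k l else 0)]

section Matrix

variable (L : HermitianMackey U F) {n : ℕ}

lemma conjT_add (X Y : Matrix (Fin n) (Fin n) U) :
    conjT L (X + Y) = conjT L X + conjT L Y := by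
  ext i j
  exact L.w_add _ _

lemma conjT_mul (X Y : Matrix (Fin n) (Fin n) U) :
    conjT L (X * Y) = conjT L Y * conjT L X := by
  ext i j
  simp only [conjT, Matrix.of_apply, Matrix.mul_apply, L.w_sum, L.w_mul]

lemma conjT_conjT (X : Matrix (Fin n) (Fin n) U) : conjT L (conjT L X) = X := by
  ext i j
  exact L.w_invol _

lemma conjT_mRest (Boff : Fin n → Fin n → U) (Bdiag : Fin n → F) :
    conjT L (mRest L Boff Bdiag) = mRest L Boff Bdiag := by
  ext k l
  rcases lt_trichotomy k l with h | rfl | h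
  · simp [conjT, mRest, h, h.not_gt, L.w_invol]
  · simp [conjT, mRest, L.R_equiv]
  · simp [conjT, mRest, h, h.not_gt]

lemma conjT_mul_mul_conjT {M : Matrix (Fin n) (Fin n) U} (hM : conjT L M = M)
    (X Y : Matrix (Fin n) (Fin n) U) :
    conjT L (X * M * conjT L Y) = Y * M * conjT L X := by
  rw [conjT_mul, conjT_mul, conjT_conjT, hM, Matrix.mul_assoc]

def upperTransferSum (M X Y : Matrix (Fin n) (Fin n) U) (i : Fin n) : F :=
  ∑ k, ∑ l, if k < l then L.T (X i k * M k l * L.w (Y i l)) else 0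

lemma upperTransferSum_add_left (M X X' Y : Matrix (Fin n) (Fin n) U) (i : Fin n) :
    upperTransferSum L M (X + X') Y i =
      upperTransferSum L M X Y i + upperTransferSum L M X' Y i := by
  simp only [upperTransferSum, Matrix.add_apply, add_mul, L.T_add, ite_add_zero,
    Finset.sum_add_distrib]

lemma upperTransferSum_add_right (M X Y Y' : Matrix (Fin n) (Fin n) U) (i : Fin n) :
    upperTransferSum L M X (Y + Y') i =
      upperTransferSum L M X Y i + upperTransferSum L M X Y' i := by
  simp only [upperTransferSum, Matrix.add_apply, L.w_add, mul_add, L.T_add, ite_add_zero,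
    Finset.sum_add_distrib]

lemma T_mul_mul_conjT_apply_self {M : Matrix (Fin n) (Fin n) U} (hM : conjT L M = M)
    (X Y : Matrix (Fin n) (Fin n) U) (i : Fin n) :
    L.T ((X * M * conjT L Y) i i) =
      upperTransferSum L M X Y i + upperTransferSum L M Y X i +
        ∑ k, L.T (X i k * M k k * L.w (Y i k)) := by
  have expand :
      L.T ((X * M * conjT L Y) i i) = ∑ k, ∑ l, L.T (X i k * M k l * L.w (Y i l)) := by
    simp only [Matrix.mul_apply, conjT, Matrix.of_apply, Finset.sum_mul, L.T_sum]
    exact Finset.sum_comm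
  have lower :
      ∀ k l, L.T (X i l * M l k * L.w (Y i k)) = L.T (Y i k * M k l * L.w (X i l)) := by
    intro k l
    have hMlk : L.w (M l k) = M k l := congrFun (congrFun hM k) l
    rw [← L.T_equiv, L.w_mul, L.w_mul, L.w_invol, hMlk, mul_assoc]
  rw [expand, Finset.sum_sum_eq_upper_add_lower_add_diag]
  simp only [lower, upperTransferSum]

end Matrix

section Action

variable (L : HermitianMackey U F) {n : ℕ} (A A' : Matrix (Fin n) (Fin n) U)
  (Boff : Fin n → Fin n → U) (Bdiag : Fin n → F)

lemma mActOff_add (i j : Fin n) :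
    mActOff L (A + A') Boff Bdiag i j =
      mActOff L A Boff Bdiag i j + mActOff L A' Boff Bdiag i j +
        mTransOff L (A * mRest L Boff Bdiag * conjT L A') i j := by
  have swap : (A' * mRest L Boff Bdiag * conjT L A) i j =
      L.w ((A * mRest L Boff Bdiag * conjT L A') j i) := by
    rw [← conjT_mul_mul_conjT L (conjT_mRest L Boff Bdiag) A A']
    rfl
  simp only [mActOff, mTransOff, conjT_add, Matrix.add_mul, Matrix.mul_add, Matrix.add_apply,
    swap]
  abel

lemma mActDiag_eq (i : Fin n) :
    mActDiag L A Boff Bdiag i =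
      upperTransferSum L (mRest L Boff Bdiag) A A i + ∑ k, L.act (A i k) (Bdiag k) :=
  rfl

lemma mActDiag_add (i : Fin n) :
    mActDiag L (A + A') Boff Bdiag i =
      mActDiag L A Boff Bdiag i + mActDiag L A' Boff Bdiag i +
        mTransDiag L (A * mRest L Boff Bdiag * conjT L A') i := by
  have mRest_diag : ∀ k, mRest L Boff Bdiag k k = L.R (Bdiag k) := by simp [mRest]
  rw [mTransDiag, T_mul_mul_conjT_apply_self L (conjT_mRest L Boff Bdiag), mActDiag_eq,
    mActDiag_eq, mActDiag_eq, upperTransferSum_add_left, upperTransferSum_add_right,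
    upperTransferSum_add_right]
  simp only [Matrix.add_apply, L.add_act, Finset.sum_add_distrib, mRest_diag]
  abel

end Action

/-- the distributivity axiom for the matrix action:
`(A + A') • B = A • B + A' • B + T(A · R(B) · w(A'))`. -/
theorem matrix_action_distrib {U F : Type} [Ring U] [AddCommGroup F]
    (L : HermitianMackey U F) (n : ℕ)
    (A A' : Matrix (Fin n) (Fin n) U)
    (Boff : Fin n → Fin n → U) (Bdiag : Fin n → F) :
    (∀ i j : Fin n, i < j →
        mActOff L (A + A') Boff Bdiag i j =
          mActOff L A Boff Bdiag i j + mActOff L A' Boff Bdiag i j +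
            mTransOff L (A * mRest L Boff Bdiag * conjT L A') i j) ∧
    (∀ i : Fin n,
        mActDiag L (A + A') Boff Bdiag i =
          mActDiag L A Boff Bdiag i + mActDiag L A' Boff Bdiag i +
            mTransDiag L (A * mRest L Boff Bdiag * conjT L A') i) := by
  exact ⟨fun i j _ => mActOff_add L A A' Boff Bdiag i j, mActDiag_add L A A' Boff Bdiag⟩
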